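/- arXiv:2206.05129 — 4 statements merged into one kernel-verified Lean document; each statement's English description precedes it below -/
import Mathlib

section
/- The Moreau envelope of the ℓ0 norm with index β at x ∈ ℝ^N equals the sum over i of φ(x_i), where φ(t) = 1 if |t| ≥ √(2β) and φ(t) = t²/(2β) otherwise. -/
open Finset Filter

open scoped Classical

/-- Euclidean norm on `Fin n → ℝ`. -/
noncomputable def l2norm {n : ℕ} (x : Fin n → ℝ) : ℝ := Real.sqrt (∑ i, x i ^ 2)

/-- The ℓ0 "norm": the number of nonzero components, as a real number. -/
noncomputable def l0 {n : ℕ} (x : Fin n → ℝ) : ℝ :=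
  ((Finset.univ.filter fun i => x i ≠ 0).card : ℝ)

/-- The support of a vector. -/
noncomputable def supp {n : ℕ} (x : Fin n → ℝ) : Finset (Fin n) :=
  Finset.univ.filter fun i => x i ≠ 0

/-- The (set-valued) proximity operator of `β⁻¹`-scaled ℓ0 norm:
`prox_{β‖·‖₀}(z) = argmin_x (1/(2β))‖x - z‖² + ‖x‖₀`. -/
noncomputable def proxSet {n : ℕ} (β : ℝ) (z : Fin n → ℝ) : Set (Fin n → ℝ) :=
  {x | ∀ w : Fin n → ℝ,
    (1 / (2 * β)) * (l2norm (x - z)) ^ 2 + l0 x ≤ (1 / (2 * β)) * (l2norm (w - z)) ^ 2 + l0 w}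

/-- The coordinate projection onto `B_𝒩 = {x : supp x ⊆ 𝒩}`. -/
def Pproj {n : ℕ} (𝒩 : Finset (Fin n)) (y : Fin n → ℝ) : Fin n → ℝ :=
  fun i => if i ∈ 𝒩 then y i else 0

lemma obj_eq_sum {N : ℕ} (β : ℝ) (hβ : 0 < β) (x z : Fin N → ℝ) :
    (1 / (2 * β)) * (l2norm (x - z)) ^ 2 + l0 z
      = ∑ i, ((x i - z i) ^ 2 / (2 * β) + if z i ≠ 0 then (1:ℝ) else 0) := by
  have h2β : (0:ℝ) < 2 * β := by linarith
  have hsq : (l2norm (x - z)) ^ 2 = ∑ i, (x i - z i) ^ 2 := by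
    simp only [l2norm, Pi.sub_apply]
    exact Real.sq_sqrt (Finset.sum_nonneg fun i _ => sq_nonneg _)
  have hl0 : l0 z = ∑ i, if z i ≠ 0 then (1:ℝ) else 0 := by
    rw [l0]; rw [Finset.sum_boole]
  rw [hsq, hl0, Finset.sum_add_distrib, Finset.mul_sum]
  congr 1
  refine Finset.sum_congr rfl fun i _ => ?_
  field_simp

lemma key_ineq (β a t : ℝ) (hβ : 0 < β) :
    (if Real.sqrt (2 * β) ≤ |a| then (1:ℝ) else a ^ 2 / (2 * β))
      ≤ (a - t) ^ 2 / (2 * β) + if t ≠ 0 then (1:ℝ) else 0 := by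
  have h2β : (0:ℝ) < 2 * β := by linarith
  by_cases ht : t = 0
  · simp only [ht, sub_zero, ne_eq, not_true_eq_false, if_false, add_zero]
    split_ifs with h
    · have : 2 * β ≤ a ^ 2 := by
        nlinarith [Real.sq_sqrt h2β.le, sq_abs a, abs_nonneg a, Real.sqrt_nonneg (2*β), sq_nonneg (|a| - Real.sqrt (2*β))]
      rw [le_div_iff₀ h2β]; linarith
    · exact le_rfl
  · rw [if_pos ht]
    have h1 : (0:ℝ) ≤ (a - t) ^ 2 / (2 * β) := div_nonneg (sq_nonneg _) h2β.le
    split_ifs with h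
    · linarith
    · push_neg at h
      have : a ^ 2 < 2 * β := by
        nlinarith [Real.sq_sqrt h2β.le, sq_abs a, abs_nonneg a, Real.sqrt_nonneg (2*β)]
      have : a ^ 2 / (2 * β) ≤ 1 := by rw [div_le_one h2β]; linarith
      linarith

/-- The Moreau envelope of the ℓ0 norm with index `β` at `x` equals `∑ i, φ (x i)`,
where `φ t = 1` if `|t| ≥ √(2β)` and `φ t = t²/(2β)` otherwise. -/
theorem moreau_envelope_l0 {N : ℕ} (β : ℝ) (hβ : 0 < β) (x : Fin N → ℝ) :
    IsLeast {v : ℝ | ∃ z : Fin N → ℝ, v = (1 / (2 * β)) * (l2norm (x - z)) ^ 2 + l0 z}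
      (∑ i, if Real.sqrt (2 * β) ≤ |x i| then (1 : ℝ) else (x i) ^ 2 / (2 * β)) := by
  have h2β : (0:ℝ) < 2 * β := by linarith
  constructor
  · refine ⟨fun i => if Real.sqrt (2 * β) ≤ |x i| then x i else 0, ?_⟩
    rw [obj_eq_sum β hβ]
    refine Finset.sum_congr rfl fun i _ => ?_
    by_cases h : Real.sqrt (2 * β) ≤ |x i|
    · have hx0 : x i ≠ 0 := by
        intro h0
        rw [h0, abs_zero] at h
        exact absurd (Real.sqrt_pos.mpr h2β) (not_lt.mpr h)
      simp only [if_pos h, sub_self, ne_eq, hx0, not_false_eq_true, if_true]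
      norm_num
    · simp only [if_neg h, sub_zero, ne_eq, not_true_eq_false, if_false, add_zero]
  · rintro v ⟨z, rfl⟩
    rw [obj_eq_sum β hβ]
    exact Finset.sum_le_sum fun i _ => key_ineq β (x i) (z i) hβ
end

section
/- For a scalar z ∈ ℝ and β > 0, the proximity set prox_{β|·|₀}(z) := argmin_x { (1/(2β))(x − z)² + |x|₀ } equals {z} if |z| > √(2β), equals {z, 0} if |z| = √(2β), and equals {0} if |z| < √(2β). -/
/-- For a scalar `z` and `β > 0`, the prox set of `|·|₀` (with `|x|₀ = 1` if `x ≠ 0`, else `0`)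
equals `{z}` if `|z| > √(2β)`, `{z, 0}` if `|z| = √(2β)`, and `{0}` if `|z| < √(2β)`. -/
theorem prox_scalar_l0 (β z : ℝ) (hβ : 0 < β) :
    let P : Set ℝ := {x | ∀ w : ℝ,
      (1 / (2 * β)) * (x - z) ^ 2 + (if x ≠ 0 then (1 : ℝ) else 0) ≤
        (1 / (2 * β)) * (w - z) ^ 2 + (if w ≠ 0 then (1 : ℝ) else 0)}
    (Real.sqrt (2 * β) < |z| → P = {z}) ∧
    (|z| = Real.sqrt (2 * β) → P = {z, 0}) ∧
    (|z| < Real.sqrt (2 * β) → P = {0}) := by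
  intro P
  have h2β : (0:ℝ) ≤ 2 * β := by linarith
  have hs : Real.sqrt (2*β) ^ 2 = 2*β := Real.sq_sqrt h2β
  have hsn : 0 ≤ Real.sqrt (2*β) := Real.sqrt_nonneg _
  have hc : 0 < 1/(2*β) := by positivity
  refine ⟨?_, ?_, ?_⟩
  · -- |z| > sqrt(2β)
    intro h
    have hz2 : 2*β < z^2 := by nlinarith [sq_abs z, abs_nonneg z]
    have hz0 : z ≠ 0 := by
      intro h0; rw [h0] at hz2; simp at hz2; linarith
    have hgt1 : 1 < (1/(2*β)) * z^2 := by
      rw [div_mul_eq_mul_div, one_mul, lt_div_iff₀ (by linarith)]; linarith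
    ext x
    simp only [Set.mem_setOf_eq, Set.mem_singleton_iff]
    constructor
    · intro hx
      have h2 := hx z
      simp only [if_neg (not_not.mpr rfl), if_pos hz0] at h2
      by_cases hx0 : x = 0
      · exfalso
        rw [hx0] at h2
        simp only [if_neg (not_not.mpr rfl)] at h2
        nlinarith
      · simp only [if_pos hx0] at h2
        have : (x - z)^2 ≤ 0 := by nlinarith
        have : (x - z)^2 = 0 := le_antisymm this (sq_nonneg _)
        have := pow_eq_zero_iff (n := 2) (by norm_num) |>.mp this
        linarith [this]
    · rintro rfl
      intro w
      simp only [if_pos hz0, sub_self]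
      by_cases hw : w = 0
      · subst hw
        simp only [ne_eq, not_true_eq_false, if_false]
        nlinarith
      · simp only [if_pos hw]
        nlinarith [sq_nonneg (w - x)]
  · -- |z| = sqrt(2β)
    intro h
    have hz2 : z^2 = 2*β := by nlinarith [sq_abs z]
    have hz0 : z ≠ 0 := by
      intro h0; rw [h0] at hz2; simp at hz2; linarith
    have heq1 : (1/(2*β)) * z^2 = 1 := by
      rw [hz2]; field_simp
    ext x
    simp only [Set.mem_setOf_eq, Set.mem_insert_iff, Set.mem_singleton_iff]
    constructor
    · intro hx
      by_cases hx0 : x = 0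
      · right; exact hx0
      · left
        have h2 := hx z
        simp only [if_pos hz0, if_pos hx0, sub_self] at h2
        have : (x - z)^2 ≤ 0 := by nlinarith
        have : (x - z)^2 = 0 := le_antisymm this (sq_nonneg _)
        have := pow_eq_zero_iff (n := 2) (by norm_num) |>.mp this
        linarith [this]
    · intro hx w
      have hfw : (1:ℝ) ≤ (1 / (2 * β)) * (w - z) ^ 2 + (if w ≠ 0 then (1 : ℝ) else 0) := by
        by_cases hw : w = 0
        · subst hw
          simp only [ne_eq, not_true_eq_false, if_false, add_zero, zero_sub, neg_sq]
          linarith [heq1]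
        · simp only [if_pos hw]
          nlinarith [sq_nonneg (w - z)]
      rcases hx with rfl | rfl
      · simpa [hz0] using hfw
      · simp only [ne_eq, not_true_eq_false, if_false, add_zero, zero_sub, neg_sq]
        rw [heq1]
        exact hfw
  · -- |z| < sqrt(2β)
    intro h
    have hz2 : z^2 < 2*β := by nlinarith [sq_abs z, abs_nonneg z]
    have hlt1 : (1/(2*β)) * z^2 < 1 := by
      rw [div_mul_eq_mul_div, one_mul, div_lt_one (by linarith)]; linarith
    ext x
    simp only [Set.mem_setOf_eq, Set.mem_singleton_iff]
    constructor
    · intro hx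
      by_contra hx0
      have h1 := hx 0
      simp only [if_pos hx0, if_neg (not_not.mpr rfl), add_zero, zero_sub, neg_sq] at h1
      nlinarith [sq_nonneg (x - z)]
    · rintro rfl
      intro w
      simp only [if_neg (not_not.mpr rfl), add_zero, zero_sub, neg_sq]
      by_cases hw : w = 0
      · subst hw; simp
      · simp only [if_pos hw]
        nlinarith [sq_nonneg (w - z)]
end

section
/- Let β > 0 and suppose x ∈ prox_{β‖·‖₀}(z). Then: (i) for every j in the support of x, |x_j| = |z_j| ≥ √(2β); (ii) for every j not in the support of x, x_j = 0 and |z_j| ≤ √(2β); (iii) x = P_{B_{N(x)}}(z). -/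
open Finset Filter

open scoped Classical

lemma l2sq {n : ℕ} (y : Fin n → ℝ) : l2norm y ^ 2 = ∑ i, y i ^ 2 := by
  exact Real.sq_sqrt (Finset.sum_nonneg fun i _ => sq_nonneg _)

lemma sum_update_sq {n : ℕ} (x z : Fin n → ℝ) (j : Fin n) (v : ℝ) :
    ∑ i, (Function.update x j v i - z i) ^ 2
      = ∑ i, (x i - z i) ^ 2 - (x j - z j) ^ 2 + (v - z j) ^ 2 := by
  have h : (fun i => (Function.update x j v i - z i) ^ 2)
      = Function.update (fun i => (x i - z i) ^ 2) j ((v - z j) ^ 2) := by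
    funext i
    by_cases hi : i = j
    · subst hi; simp
    · simp [Function.update_of_ne hi]
  rw [h, Finset.sum_update_of_mem (Finset.mem_univ j), Finset.sdiff_singleton_eq_erase]
  rw [← Finset.add_sum_erase _ (fun i => (x i - z i) ^ 2) (Finset.mem_univ j)]
  ring

lemma l0_update_zero {n : ℕ} (x : Fin n → ℝ) (j : Fin n) (hj : x j ≠ 0) :
    l0 (Function.update x j 0) = l0 x - 1 := by
  have h : (Finset.univ.filter fun i => Function.update x j 0 i ≠ 0)
      = (Finset.univ.filter fun i => x i ≠ 0).erase j := by
    ext i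
    by_cases hi : i = j
    · subst hi; simp
    · simp [Function.update_of_ne hi, hi]
  have hmem : j ∈ Finset.univ.filter fun i => x i ≠ 0 := by simp [hj]
  rw [l0, l0, h, Finset.card_erase_of_mem hmem]
  have : 1 ≤ (Finset.univ.filter fun i => x i ≠ 0).card := Finset.card_pos.mpr ⟨j, hmem⟩
  push_cast [Nat.cast_sub this]
  ring

lemma l0_update_same {n : ℕ} (x : Fin n → ℝ) (j : Fin n) (v : ℝ) (hj : x j ≠ 0)
    (hv : v ≠ 0) : l0 (Function.update x j v) = l0 x := by
  have h : (Finset.univ.filter fun i => Function.update x j v i ≠ 0)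
      = Finset.univ.filter fun i => x i ≠ 0 := by
    ext i
    by_cases hi : i = j
    · subst hi; simp [hv, hj]
    · simp [Function.update_of_ne hi]
  rw [l0, l0, h]

lemma l0_update_le {n : ℕ} (x : Fin n → ℝ) (j : Fin n) (v : ℝ) :
    l0 (Function.update x j v) ≤ l0 x + 1 := by
  have h : (Finset.univ.filter fun i => Function.update x j v i ≠ 0)
      ⊆ insert j (Finset.univ.filter fun i => x i ≠ 0) := by
    intro i hi
    by_cases hij : i = j
    · subst hij; simp
    · simp only [Finset.mem_filter, Function.update_of_ne hij] at hi
      exact Finset.mem_insert_of_mem (by simp [hi.2])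
  have := Finset.card_le_card h
  have h2 := Finset.card_insert_le j (Finset.univ.filter fun i => x i ≠ 0)
  rw [l0, l0]
  exact_mod_cast le_trans this h2

/-- If `x ∈ prox_{β‖·‖₀}(z)`, then (i) on the support of `x`, `|x_j| = |z_j| ≥ √(2β)`;
(ii) off the support, `x_j = 0` and `|z_j| ≤ √(2β)`; (iii) `x = P_{B_{N(x)}}(z)`. -/
theorem prox_properties {N : ℕ} (β : ℝ) (hβ : 0 < β) (x z : Fin N → ℝ)
    (hx : x ∈ proxSet β z) :
    (∀ j ∈ supp x, |x j| = |z j| ∧ Real.sqrt (2 * β) ≤ |z j|) ∧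
    (∀ j ∉ supp x, x j = 0 ∧ |z j| ≤ Real.sqrt (2 * β)) ∧
    x = Pproj (supp x) z := by
  have h2β : (0:ℝ) < 2 * β := by linarith
  have hne : (2 * β) ≠ 0 := ne_of_gt h2β
  have key : ∀ w : Fin N → ℝ,
      (∑ i, (x i - z i) ^ 2) + 2 * β * l0 x
        ≤ (∑ i, (w i - z i) ^ 2) + 2 * β * l0 w := by
    intro w
    have h0 := hx w
    simp only [l2sq, Pi.sub_apply] at h0
    have h := mul_le_mul_of_nonneg_left h0 (le_of_lt h2β)
    have e1 : (2*β) * ((1/(2*β)) * (∑ i, (x i - z i) ^ 2) + l0 x)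
        = (∑ i, (x i - z i) ^ 2) + 2 * β * l0 x := by field_simp
    have e2 : (2*β) * ((1/(2*β)) * (∑ i, (w i - z i) ^ 2) + l0 w)
        = (∑ i, (w i - z i) ^ 2) + 2 * β * l0 w := by field_simp
    linarith [h, e1.le, e1.ge, e2.le, e2.ge]
  -- Claim A: on the support, x j = z j and 2β ≤ (z j)^2.
  have claimA : ∀ j : Fin N, x j ≠ 0 → x j = z j ∧ 2 * β ≤ (z j) ^ 2 := by
    intro j hj
    have h1 := key (Function.update x j 0)
    rw [sum_update_sq, l0_update_zero x j hj] at h1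
    have E1 : (x j - z j) ^ 2 + 2 * β ≤ (z j) ^ 2 := by nlinarith [h1]
    have hz : z j ≠ 0 := by
      intro h0
      rw [h0] at E1
      nlinarith [sq_nonneg (x j - 0)]
    have h2 := key (Function.update x j (z j))
    rw [sum_update_sq, l0_update_same x j (z j) hj hz] at h2
    have hxzeq : x j = z j := by nlinarith [sq_nonneg (x j - z j), h2]
    exact ⟨hxzeq, by nlinarith [E1, sq_nonneg (x j - z j)]⟩
  refine ⟨?_, ?_, ?_⟩
  · intro j hj
    have hj' : x j ≠ 0 := by simpa [supp] using hj
    obtain ⟨heq, hle⟩ := claimA j hj'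
    refine ⟨by rw [heq], ?_⟩
    calc Real.sqrt (2 * β) ≤ Real.sqrt ((z j) ^ 2) := Real.sqrt_le_sqrt hle
      _ = |z j| := Real.sqrt_sq_eq_abs _
  · intro j hj
    have hj' : x j = 0 := by
      by_contra h
      exact hj (by simp [supp, h])
    refine ⟨hj', ?_⟩
    have h1 := key (Function.update x j (z j))
    rw [sum_update_sq] at h1
    have h2 := l0_update_le x j (z j)
    have h3 := mul_le_mul_of_nonneg_left h2 (le_of_lt h2β)
    have hzsq : (z j) ^ 2 ≤ 2 * β := by
      rw [hj'] at h1
      nlinarith [h1, h3]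
    calc |z j| = Real.sqrt ((z j) ^ 2) := (Real.sqrt_sq_eq_abs _).symm
      _ ≤ Real.sqrt (2 * β) := Real.sqrt_le_sqrt hzsq
  · funext j
    by_cases hj : x j = 0
    · have : j ∉ supp x := by simp [supp, hj]
      simp [Pproj, this, hj]
    · have : j ∈ supp x := by simp [supp, hj]
      simp [Pproj, this, (claimA j hj).1]
end

section
/- Let β > 0 and suppose x^k ∈ prox_{β‖·‖₀}(z^k) and x^{k+1} ∈ prox_{β‖·‖₀}(z^{k+1}) for some z^k, z^{k+1} ∈ ℝ^N. If N(x^k) ≠ N(x^{k+1}), then ‖x^{k+1} − x^k‖₂ ≥ √(2β). -/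
open Finset Filter

open scoped Classical

lemma sq_l2norm {n : ℕ} (x : Fin n → ℝ) : l2norm x ^ 2 = ∑ i, x i ^ 2 := by
  rw [l2norm, Real.sq_sqrt]
  exact Finset.sum_nonneg fun i _ => sq_nonneg _

lemma prox_coord_eq {n : ℕ} {β : ℝ} (hβ : 0 < β) {z x : Fin n → ℝ}
    (hx : x ∈ proxSet β z) {i : Fin n} (hi : x i ≠ 0) : x i = z i := by
  have h := hx (Function.update x i (z i))
  set w := Function.update x i (z i) with hw
  have hS : ∑ j, (w - z) j ^ 2 = (∑ j, (x - z) j ^ 2) - (x i - z i) ^ 2 := by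
    rw [← Finset.add_sum_erase _ _ (Finset.mem_univ i),
        ← Finset.add_sum_erase _ (fun j => (x - z) j ^ 2) (Finset.mem_univ i)]
    have : ∑ j ∈ Finset.univ.erase i, (w - z) j ^ 2
        = ∑ j ∈ Finset.univ.erase i, (x - z) j ^ 2 := by
      apply Finset.sum_congr rfl
      intro j hj
      simp [hw, Function.update_of_ne (Finset.ne_of_mem_erase hj)]
    rw [this]
    simp [hw]
  have hcard : l0 w ≤ l0 x := by
    unfold l0
    have hsub : (Finset.univ.filter fun j => w j ≠ 0) ⊆
        Finset.univ.filter fun j => x j ≠ 0 := by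
      intro j hj
      simp only [Finset.mem_filter, Finset.mem_univ, true_and] at hj ⊢
      by_cases hji : j = i
      · subst hji; exact hi
      · rwa [hw, Function.update_of_ne hji] at hj
    exact_mod_cast Finset.card_le_card hsub
  rw [sq_l2norm, sq_l2norm, hS] at h
  have hb : 0 < 1 / (2 * β) := by positivity
  have h1 : (1 / (2 * β)) * (x i - z i) ^ 2 ≤ 0 := by nlinarith
  have h2 : (1 / (2 * β)) * (x i - z i) ^ 2 = 0 :=
    le_antisymm h1 (mul_nonneg hb.le (sq_nonneg _))
  have h3 : (x i - z i) ^ 2 = 0 := by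
    rcases mul_eq_zero.1 h2 with h | h
    · exact absurd h hb.ne'
    · exact h
  have h4 : x i - z i = 0 := by
    exact pow_eq_zero_iff (by norm_num) |>.1 h3
  linarith

lemma prox_coord_big {n : ℕ} {β : ℝ} (hβ : 0 < β) {z x : Fin n → ℝ}
    (hx : x ∈ proxSet β z) {i : Fin n} (hi : x i ≠ 0) : 2 * β ≤ x i ^ 2 := by
  have hxz := prox_coord_eq hβ hx hi
  have h := hx (Function.update x i 0)
  set w := Function.update x i (0:ℝ) with hw
  have hS : ∑ j, (w - z) j ^ 2 = (∑ j, (x - z) j ^ 2) + x i ^ 2 := by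
    rw [← Finset.add_sum_erase _ _ (Finset.mem_univ i),
        ← Finset.add_sum_erase _ (fun j => (x - z) j ^ 2) (Finset.mem_univ i)]
    have : ∑ j ∈ Finset.univ.erase i, (w - z) j ^ 2
        = ∑ j ∈ Finset.univ.erase i, (x - z) j ^ 2 := by
      apply Finset.sum_congr rfl
      intro j hj
      simp [hw, Function.update_of_ne (Finset.ne_of_mem_erase hj)]
    rw [this]
    simp [hw, ← hxz]
    ring
  have hcard : l0 w = l0 x - 1 := by
    unfold l0
    have hfil : (Finset.univ.filter fun j => w j ≠ 0) =
        (Finset.univ.filter fun j => x j ≠ 0).erase i := by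
      ext j
      simp only [Finset.mem_filter, Finset.mem_univ, true_and, Finset.mem_erase]
      by_cases hji : j = i
      · subst hji; simp [hw]
      · simp [hw, Function.update_of_ne hji, hji]
    rw [hfil, Finset.card_erase_of_mem (by simp [hi])]
    have hpos : 0 < (Finset.univ.filter fun j => x j ≠ 0).card :=
      Finset.card_pos.2 ⟨i, by simp [hi]⟩
    push_cast [Nat.cast_sub hpos]
    ring
  rw [sq_l2norm, sq_l2norm, hS, hcard] at h
  have hb : 0 < 1 / (2 * β) := by positivity
  have h1 : 1 ≤ (1 / (2 * β)) * x i ^ 2 := by linarith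
  have h2 := mul_le_mul_of_nonneg_left h1 (by positivity : (0:ℝ) ≤ 2 * β)
  have h3 : 2 * β * ((1 / (2 * β)) * x i ^ 2) = x i ^ 2 := by field_simp
  linarith

/-- If `x^k ∈ prox_{β‖·‖₀}(z^k)`, `x^{k+1} ∈ prox_{β‖·‖₀}(z^{k+1})` and their supports
differ, then `‖x^{k+1} - x^k‖₂ ≥ √(2β)`. -/
theorem prox_support_change_gap {N : ℕ} (β : ℝ) (hβ : 0 < β)
    (xk xk1 zk zk1 : Fin N → ℝ)
    (hk : xk ∈ proxSet β zk) (hk1 : xk1 ∈ proxSet β zk1)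
    (hne : supp xk ≠ supp xk1) :
    Real.sqrt (2 * β) ≤ l2norm (xk1 - xk) := by
  classical
  have hex : ∃ i : Fin N, ¬ (i ∈ supp xk ↔ i ∈ supp xk1) := by
    by_contra hc
    push_neg at hc
    exact hne (Finset.ext fun i => hc i)
  obtain ⟨i, hi⟩ := hex
  simp only [supp, Finset.mem_filter, Finset.mem_univ, true_and] at hi
  have key : 2 * β ≤ ((xk1 - xk) i) ^ 2 := by
    by_cases h0 : xk i = 0
    · have h1 : xk1 i ≠ 0 := by tauto
      have := prox_coord_big hβ hk1 h1
      simpa [Pi.sub_apply, h0] using this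
    · have h1 : xk1 i = 0 := by tauto
      have := prox_coord_big hβ hk h0
      calc 2 * β ≤ xk i ^ 2 := this
        _ = ((xk1 - xk) i) ^ 2 := by simp [Pi.sub_apply, h1]
  have hsum : 2 * β ≤ ∑ j, ((xk1 - xk) j) ^ 2 := by
    refine le_trans key (Finset.single_le_sum (f := fun j => ((xk1 - xk) j) ^ 2)
      (fun j _ => sq_nonneg _) (Finset.mem_univ i))
  calc Real.sqrt (2 * β) ≤ Real.sqrt (∑ j, ((xk1 - xk) j) ^ 2) := Real.sqrt_le_sqrt hsum
    _ = l2norm (xk1 - xk) := rfl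
end
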